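/- arXiv:2001.06358 — 6 statements merged into one kernel-verified Lean document; each statement's English description precedes it below -/
import Mathlib

section
/- Let F be a standard Borel space. Then the instance space 𝔻 is itself standard Borel: there exists a topology τ on Finset F such that (Finset F, τ) is a Polish space and the Borel σ-algebra generated by τ coincides with the σ-algebra comapped along ι from the canonical σ-algebra on Measure F. -/
open MeasureTheory

/-- The canonical embedding of a database instance (a finite set of facts)
into the space of measures: `S ↦ ∑_{x ∈ S} δ_x`. -/
noncomputable def iota {F : Type*} [MeasurableSpace F] (S : Finset F) : Measure F :=
  ∑ x ∈ S, Measure.dirac x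

/-!
Transport the order of `ℝ` to `F` along a Borel embedding `e : F → ℝ`. Listing a finite set
increasingly identifies `Finset F` with the disjoint union over `n` of the strictly increasing
`n`-tuples, a standard Borel space, and this bijection is measurable because `ι` of a tuple is a
finite sum of Dirac masses. The σ-algebra comapped along `ι` is countably separated: a finite set
is determined by the counts `ι S (e⁻¹' (a, b))` over rational intervals, since finite measures on
`ℝ` are determined by these. By Lusin–Souslin, a measurable bijection from a standard Borel space
onto a countably separated space is a Borel isomorphism.
-/

open Set Function Topology

section Sigma

variable {ι : Type*} {X : ι → Type*}

theorem measurableSet_sigma_iff [∀ i, MeasurableSpace (X i)] {s : Set (Σ i, X i)} :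
    MeasurableSet s ↔ ∀ i, MeasurableSet (Sigma.mk i ⁻¹' s) :=
  MeasurableSpace.measurableSet_iInf

theorem measurable_sigma_iff [∀ i, MeasurableSpace (X i)] {β : Type*} [MeasurableSpace β]
    {f : (Σ i, X i) → β} : Measurable f ↔ ∀ i, Measurable (f ∘ Sigma.mk i) :=
  ⟨fun hf i _ hs => measurableSet_sigma_iff.1 (hf hs) i,
    fun hf _ hs => measurableSet_sigma_iff.2 fun i => hf i hs⟩

instance Sigma.borelSpace [Countable ι] [∀ i, TopologicalSpace (X i)]
    [∀ i, MeasurableSpace (X i)] [∀ i, BorelSpace (X i)] : BorelSpace (Σ i, X i) := by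
  refine ⟨le_antisymm (fun s hs => ?_) ?_⟩
  · rw [measurableSet_sigma_iff] at hs
    borelize (Σ i, X i)
    rw [← iUnion_image_preimage_sigma_mk_eq_self (σ := X) s]
    exact .iUnion fun i =>
      (IsOpenEmbedding.sigmaMk (σ := X)).measurableEmbedding.measurableSet_image' (hs i)
  · exact MeasurableSpace.generateFrom_le fun s hs =>
      measurableSet_sigma_iff.2 fun i => (hs.preimage continuous_sigmaMk).measurableSet

instance StandardBorelSpace.sigma [Countable ι] [∀ i, MeasurableSpace (X i)]
    [∀ i, StandardBorelSpace (X i)] : StandardBorelSpace (Σ i, X i) :=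
  let := fun i => upgradeStandardBorel (X i)
  have : PolishSpace (Σ i, X i) := {}
  inferInstance

end Sigma

section Transfer

variable {α β : Type*} [MeasurableSpace α] [MeasurableSpace β]

theorem MeasurableEquiv.standardBorelSpace [StandardBorelSpace α] (f : α ≃ᵐ β) :
    StandardBorelSpace β := by
  let := upgradeStandardBorel α
  let : TopologicalSpace β := .induced f.symm inferInstance
  have : PolishSpace β := f.symm.toEquiv.polishSpace_induced
  have : BorelSpace β := ⟨by
    rw [borel_comap, ← BorelSpace.measurable_eq]
    exact f.symm.measurableEmbedding.comap_eq.symm⟩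
  infer_instance

noncomputable def MeasurableEmbedding.equivOfSurjective {f : α → β} (hf : MeasurableEmbedding f)
    (hsurj : Surjective f) : α ≃ᵐ β where
  toEquiv := .ofBijective f ⟨hf.injective, hsurj⟩
  measurable_toFun := hf.measurable
  measurable_invFun s hs := by
    rw [← Equiv.image_eq_preimage_symm]
    exact hf.measurableSet_image' hs

theorem MeasurableSpace.CountablySeparated.of_injective [CountablySeparated β] {f : α → β}
    (hf : Measurable f) (hinj : Injective f) : CountablySeparated α := by
  obtain ⟨S, hSc, hSm, hS⟩ := exists_countable_separating β MeasurableSet univ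
  refine ⟨⟨(f ⁻¹' ·) '' S, hSc.image _, ?_, fun x _ y _ hxy => hinj ?_⟩⟩
  · rintro _ ⟨s, hs, rfl⟩
    exact hf (hSm s hs)
  · exact hS _ trivial _ trivial fun s hs => hxy _ ⟨s, hs, rfl⟩

end Transfer

section StrictMonoTuple

variable {α : Type*} [LinearOrder α]

theorem bijective_sigma_strictMono_image_univ :
    Bijective fun v : Σ n, {v : Fin n → α | StrictMono v} => Finset.univ.image v.2.1 := by
  constructor
  · rintro ⟨n, v, hv⟩ ⟨m, w, hw⟩ (h : Finset.univ.image v = Finset.univ.image w)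
    have hcard (k : ℕ) (u : Fin k → α) (hu : StrictMono u) : (Finset.univ.image u).card = k := by
      rw [Finset.card_image_of_injective _ hu.injective, Finset.card_univ, Fintype.card_fin]
    obtain rfl : n = m := by rw [← hcard n v hv, ← hcard m w hw, h]
    obtain rfl : v = w :=
      (hv.range_inj hw).1 (by simpa using congrArg (fun s : Finset α => (s : Set α)) h)
    rfl
  · intro S
    exact ⟨⟨S.card, S.orderEmbOfFin rfl, (S.orderEmbOfFin rfl).strictMono⟩,
      S.image_orderEmbOfFin_univ rfl⟩

variable [MeasurableSpace α]

theorem measurableSet_setOf_strictMono (hlt : MeasurableSet {p : α × α | p.1 < p.2}) (n : ℕ) :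
    MeasurableSet {v : Fin n → α | StrictMono v} := by
  simp only [StrictMono, ofPred_forall]
  refine .iInter fun i => .iInter fun j => ?_
  by_cases hij : i < j
  · simp only [hij, iInter_true]
    exact (measurable_pi_apply (X := fun _ : Fin n => α) i).prodMk (measurable_pi_apply j) hlt
  · simp [hij]

end StrictMonoTuple

section Iota

variable {F : Type*} [MeasurableSpace F]

instance isFiniteMeasure_iota (S : Finset F) : IsFiniteMeasure (iota S) := by
  unfold iota
  infer_instance

theorem mem_iff_iota_singleton_ne_zero [MeasurableSingletonClass F] {S : Finset F} {x : F} :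
    x ∈ S ↔ iota S {x} ≠ 0 := by
  simp [iota]

theorem iota_injective [MeasurableSingletonClass F] : Injective (iota (F := F)) := by
  intro S T h
  ext x
  rw [mem_iff_iota_singleton_ne_zero, mem_iff_iota_singleton_ne_zero, h]

theorem injective_iota_preimage_Ioo_rat [MeasurableSingletonClass F] {e : F → ℝ}
    (he : MeasurableEmbedding e) :
    Injective fun (S : Finset F) (a b : ℚ) => iota S (e ⁻¹' Ioo (a : ℝ) b) := by
  intro S T h
  refine iota_injective (he.map_injective (Real.measure_ext_Ioo_rat fun a b => ?_))
  rw [Measure.map_apply he.measurable measurableSet_Ioo,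
    Measure.map_apply he.measurable measurableSet_Ioo]
  exact congrFun (congrFun h a) b

theorem measurable_iota_apply {s : Set F} (hs : MeasurableSet s) :
    Measurable[.comap iota inferInstance] fun S : Finset F => iota S s :=
  (Measure.measurable_coe hs).comp (comap_measurable iota)

theorem measurable_sigma_strictMono_image_univ [LinearOrder F] :
    Measurable[_, .comap iota inferInstance]
      fun v : Σ n, {v : Fin n → F | StrictMono v} => Finset.univ.image v.2.1 := by
  refine measurable_comap_iff.2 (measurable_sigma_iff.2 fun n => ?_)
  have h (v : {v : Fin n → F | StrictMono v}) :
      iota (Finset.univ.image v.1) = ∑ i, Measure.dirac (v.1 i) :=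
    Finset.sum_image fun i _ j _ hij => v.2.injective hij
  simp only [comp_def, h]
  exact Finset.measurable_sum _ fun i _ =>
    Measure.measurable_dirac.comp ((measurable_pi_apply i).comp measurable_subtype_coe)

end Iota

/-- If `F` is standard Borel, the instance space `𝔻 = Finset F`, equipped with the
σ-algebra comapped along `ι` from the canonical σ-algebra on `Measure F`, is
standard Borel: there is a Polish topology on `Finset F` whose Borel σ-algebra
is exactly that σ-algebra. -/
theorem instanceSpace_standardBorel (F : Type*) [MeasurableSpace F] [StandardBorelSpace F] :
    ∃ τ : TopologicalSpace (Finset F),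
      @PolishSpace (Finset F) τ ∧
      @borel (Finset F) τ =
        MeasurableSpace.comap iota (inferInstance : MeasurableSpace (Measure F)) := by
  let : MeasurableSpace (Finset F) := .comap iota inferInstance
  suffices StandardBorelSpace (Finset F) by
    obtain ⟨τ, hB, hP⟩ := this.polish
    exact ⟨τ, hP, hB.measurable_eq.symm⟩
  obtain ⟨e, he⟩ := exists_measurableEmbedding_real F
  let : LinearOrder F := .lift' e he.injective
  have hlt : MeasurableSet {p : F × F | p.1 < p.2} :=
    measurableSet_lt (f := fun p : F × F => e p.1) (g := fun p => e p.2)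
      (he.measurable.comp measurable_fst) (he.measurable.comp measurable_snd)
  have := fun n => (measurableSet_setOf_strictMono hlt n).standardBorel
  have : MeasurableSpace.CountablySeparated (Finset F) :=
    .of_injective (measurable_pi_lambda _ fun a => measurable_pi_lambda _ fun b =>
      measurable_iota_apply (he.measurable measurableSet_Ioo)) (injective_iota_preimage_Ioo_rat he)
  obtain ⟨hinj, hsurj⟩ := bijective_sigma_strictMono_image_univ (α := F)
  exact ((measurable_sigma_strictMono_image_univ.measurableEmbedding hinj).equivOfSurjective
    hsurj).standardBorelSpace
end

section
/- Let F be a standard Borel space. Then the containment set {(S, x) ∈ Finset F × F : x ∈ S} is measurable in the product σ-algebra of the instance space 𝔻 and the Borel σ-algebra of F. -/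
open MeasureTheory

/-- The instance space `𝔻`: `Finset F` equipped with the σ-algebra comapped along `ι`
from the canonical σ-algebra on `Measure F`. -/
noncomputable instance instanceSpace (F : Type*) [MeasurableSpace F] : MeasurableSpace (Finset F) :=
  MeasurableSpace.comap iota inferInstance

section aux
variable {F : Type*} [MeasurableSpace F]

lemma measurable_iota : Measurable (iota : Finset F → Measure F) :=
  measurable_iff_comap_le.mpr le_rfl

lemma iota_apply (S : Finset F) (A : Set F) : iota S A = ∑ x ∈ S, Measure.dirac x A := by
  simp [iota, Measure.finset_sum_apply]

lemma iota_univ (S : Finset F) : iota S Set.univ = S.card := by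
  simp [iota_apply]

/-- The kernel given by `iota`. -/
noncomputable def iotaKernel (F : Type*) [MeasurableSpace F] :
    ProbabilityTheory.Kernel (Finset F) F :=
  ⟨iota, measurable_iota⟩

lemma measurableSet_card (n : ℕ) : MeasurableSet {S : Finset F | S.card = n} := by
  have h : {S : Finset F | S.card = n} = (fun S => iota S Set.univ) ⁻¹' {(n : ENNReal)} := by
    ext S
    simp [iota_univ, Nat.cast_inj]
  rw [h]
  exact ((Measure.measurable_coe MeasurableSet.univ).comp measurable_iota)
    (measurableSet_singleton _)

noncomputable def iotaKernelPiece (F : Type*) [MeasurableSpace F] (n : ℕ) :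
    ProbabilityTheory.Kernel (Finset F) F :=
  ⟨({S : Finset F | S.card = n}).piecewise iota (fun _ => 0),
    Measurable.piecewise (measurableSet_card n) measurable_iota measurable_const⟩

instance (n : ℕ) : ProbabilityTheory.IsFiniteKernel (iotaKernelPiece F n) := by
  refine ⟨⟨n, ENNReal.natCast_lt_top n, fun S => ?_⟩⟩
  simp only [iotaKernelPiece, ProbabilityTheory.Kernel.coe_mk, Set.piecewise]
  split_ifs with h
  · rw [iota_univ, h]
  · simp

instance : ProbabilityTheory.IsSFiniteKernel (iotaKernel F) := by
  refine ⟨⟨fun n => iotaKernelPiece F n, fun n => inferInstance, ?_⟩⟩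
  ext S A hA
  rw [ProbabilityTheory.Kernel.sum_apply' _ _ hA]
  simp only [iotaKernelPiece, ProbabilityTheory.Kernel.coe_mk, Set.piecewise]
  rw [show (iotaKernel F) S A = iota S A from rfl]
  rw [tsum_eq_single S.card]
  · simp
  · intro n hn
    simp [Ne.symm hn]

end aux

/-- The containment set `{(S, x) : x ∈ S}` is measurable in the product σ-algebra of
the instance space `𝔻` and the (Borel) σ-algebra of the standard Borel space `F`. -/
theorem measurableSet_mem_pair (F : Type*) [MeasurableSpace F] [StandardBorelSpace F] :
    MeasurableSet {p : Finset F × F | p.2 ∈ p.1} := by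
  letI := upgradeStandardBorel F
  -- the diagonal-type set
  have hdiag : MeasurableSet {q : (Finset F × F) × F | q.2 = q.1.2} := by
    have : {q : (Finset F × F) × F | q.2 = q.1.2} =
        (fun q : (Finset F × F) × F => (q.2, q.1.2)) ⁻¹' (Set.diagonal F) := by
      ext q; simp [Set.diagonal, eq_comm]
    rw [this]
    exact (measurable_snd.prodMk (measurable_snd.comp measurable_fst))
      (IsClosed.measurableSet isClosed_diagonal)
  have hker :
      Measurable fun p : Finset F × F => iota p.1 {y | y = p.2} := by
    have := ProbabilityTheory.Kernel.measurable_kernel_prodMk_left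
      (κ := (iotaKernel F).comap Prod.fst (measurable_fst : Measurable
        (Prod.fst : Finset F × F → Finset F))) hdiag
    simpa [ProbabilityTheory.Kernel.comap_apply, iotaKernel, Set.preimage] using this
  have hset : {p : Finset F × F | p.2 ∈ p.1} =
      (fun p : Finset F × F => iota p.1 {y | y = p.2}) ⁻¹' ({0}ᶜ) := by
    ext ⟨S, x⟩
    simp only [Set.mem_setOf_eq, Set.mem_preimage, Set.mem_compl_iff, Set.mem_singleton_iff]
    have : {y | y = x} = {x} := by ext y; simp
    rw [this, iota_apply]
    constructor
    · intro hx h0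
      rw [Finset.sum_eq_zero_iff] at h0
      have := h0 x hx
      simp [Measure.dirac_apply' x (measurableSet_singleton x)] at this
    · intro h0
      by_contra hx
      apply h0
      apply Finset.sum_eq_zero
      intro y hy
      have hyx : y ∉ ({x} : Set F) := by
        simp only [Set.mem_singleton_iff]
        rintro rfl
        exact hx hy
      rw [Measure.dirac_apply' y (measurableSet_singleton x), Set.indicator_of_notMem hyx]
  rw [hset]
  exact hker ((measurableSet_singleton 0).compl)
end

section
/- Let F be a standard Borel space. For every instance S ∈ Finset F and every measurable set G ⊆ F, the set of follow-up instances {insert x S : x ∈ G} is a measurable subset of the instance space 𝔻. -/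
open MeasureTheory

lemma iota_apply_s7 {F : Type*} [MeasurableSpace F] [MeasurableSingletonClass F]
    (T : Finset F) (A : Set F) [DecidablePred (· ∈ A)] :
    iota T A = (T.filter (· ∈ A)).card := by
  simp [iota, Measure.finset_sum_apply, Measure.dirac_apply, Set.indicator_apply,
    Finset.sum_boole]

/-- For every instance `S` and every measurable set of facts `G ⊆ F`, the set of
follow-up instances `{insert x S : x ∈ G}` is measurable in the instance space `𝔻`. -/
theorem measurableSet_followUp (F : Type*) [MeasurableSpace F] [StandardBorelSpace F]
    [DecidableEq F] (S : Finset F) (G : Set F) (hG : MeasurableSet G) :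
    MeasurableSet ((fun x => insert x S) '' G) := by
  classical
  have hSm : MeasurableSet (↑S : Set F) := S.measurableSet
  set B : Set F := (↑S ∪ G)ᶜ with hB
  have hBm : MeasurableSet B := (hSm.union hG).compl
  -- key computations
  have key₁ : ∀ T : Finset F, iota T Set.univ = (T.card : ENNReal) := by
    intro T; rw [iota_apply_s7]; simp
  have key₂ : ∀ (T : Finset F) (s : F), 1 ≤ iota T {s} ↔ s ∈ T := by
    intro T s
    rw [iota_apply_s7]
    rw [show (1 : ENNReal) = ((1 : ℕ) : ENNReal) by simp, Nat.cast_le]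
    rw [Nat.one_le_iff_ne_zero, Ne, Finset.card_eq_zero, ← Ne,
      ← Finset.nonempty_iff_ne_empty, Finset.filter_nonempty_iff]
    simp
  have key₃ : ∀ T : Finset F, iota T B = 0 ↔ ∀ x ∈ T, x ∈ (↑S : Set F) ∪ G := by
    intro T
    rw [iota_apply_s7, Nat.cast_eq_zero, Finset.card_eq_zero, Finset.filter_eq_empty_iff]
    simp only [hB, Set.mem_compl_iff, not_not, Set.mem_union, Finset.mem_coe]
  -- the measurable witnesses in the space of measures
  set M : Set (Measure F) :=
    {μ | μ Set.univ = (S.card : ENNReal) + 1 ∧ (∀ s ∈ S, 1 ≤ μ {s}) ∧ μ B = 0} with hM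
  set M₀ : Set (Measure F) :=
    {μ | μ Set.univ = (S.card : ENNReal) ∧ ∀ s ∈ S, 1 ≤ μ {s}} with hM0
  have hmeas : ∀ (A : Set F), MeasurableSet A → ∀ c : ENNReal,
      MeasurableSet {μ : Measure F | μ A = c} := fun A hA c =>
    (Measure.measurable_coe hA) (measurableSet_singleton c)
  have hmeas' : ∀ (A : Set F), MeasurableSet A →
      MeasurableSet {μ : Measure F | 1 ≤ μ A} := fun A hA =>
    (Measure.measurable_coe hA) measurableSet_Ici
  have hbig : MeasurableSet (⋂ s ∈ (↑S : Set F), {μ : Measure F | 1 ≤ μ {s}}) :=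
    MeasurableSet.biInter S.countable_toSet
      (fun s _ => hmeas' _ (measurableSet_singleton s))
  have hMm : MeasurableSet M := by
    have hrw : M = {μ : Measure F | μ Set.univ = (S.card : ENNReal) + 1} ∩
        ((⋂ s ∈ (↑S : Set F), {μ : Measure F | 1 ≤ μ {s}}) ∩ {μ | μ B = 0}) := by
      ext μ; simp [hM, and_assoc]
    rw [hrw]
    exact (hmeas _ MeasurableSet.univ _).inter (hbig.inter (hmeas _ hBm _))
  have hM0m : MeasurableSet M₀ := by
    have hrw : M₀ = {μ : Measure F | μ Set.univ = (S.card : ENNReal)} ∩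
        (⋂ s ∈ (↑S : Set F), {μ : Measure F | 1 ≤ μ {s}}) := by
      ext μ; simp [hM0]
    rw [hrw]
    exact (hmeas _ MeasurableSet.univ _).inter hbig
  refine MeasurableSpace.measurableSet_comap.mpr
    ⟨M ∪ (if ∃ s ∈ S, s ∈ G then M₀ else ∅),
      hMm.union (by split_ifs <;> [exact hM0m; exact MeasurableSet.empty]), ?_⟩
  ext T
  simp only [Set.mem_preimage, Set.mem_union, Set.mem_image]
  constructor
  · rintro (⟨h1, h2, h3⟩ | hC)
    · -- iota T ∈ M : T = insert x S with x ∈ G \ S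
      have hsub : S ⊆ T := fun s hs => (key₂ T s).mp (h2 s hs)
      have hcard : T.card = S.card + 1 := by
        have := h1
        rw [key₁] at this
        exact_mod_cast this
      have hdiff : (T \ S).card = 1 := by
        rw [Finset.card_sdiff_of_subset hsub, hcard]; omega
      obtain ⟨x, hx⟩ := Finset.card_eq_one.mp hdiff
      have hxT : x ∈ T := (Finset.mem_sdiff.mp (hx ▸ Finset.mem_singleton_self x)).1
      have hxS : x ∉ S := (Finset.mem_sdiff.mp (hx ▸ Finset.mem_singleton_self x)).2
      have hxG : x ∈ G := by
        rcases (key₃ T).mp h3 x hxT with h | h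
        · exact absurd h hxS
        · exact h
      refine ⟨x, hxG, ?_⟩
      have := Finset.union_sdiff_of_subset hsub
      rw [hx] at this
      rw [← this, Finset.insert_eq, Finset.union_comm]
    · -- iota T ∈ M₀ case (only possible when S meets G) : T = S
      split_ifs at hC with hex
      · obtain ⟨h1, h2⟩ := hC
        have hsub : S ⊆ T := fun s hs => (key₂ T s).mp (h2 s hs)
        have hcard : T.card = S.card := by
          have := h1; rw [key₁] at this; exact_mod_cast this
        have hTS : T = S := (Finset.eq_of_subset_of_card_le hsub hcard.le).symm
        obtain ⟨s, hsS, hsG⟩ := hex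
        exact ⟨s, hsG, by rw [hTS, Finset.insert_eq_self.mpr hsS]⟩
      · exact absurd hC (Set.notMem_empty _)
  · rintro ⟨x, hxG, rfl⟩
    by_cases hxS : x ∈ S
    · right
      rw [if_pos ⟨x, hxS, hxG⟩]
      have hTS : insert x S = S := Finset.insert_eq_self.mpr hxS
      rw [hTS]
      exact ⟨by rw [key₁], fun s hs => (key₂ S s).mpr hs⟩
    · left
      refine ⟨?_, ?_, ?_⟩
      · rw [key₁, Finset.card_insert_of_notMem hxS]; push_cast; ring
      · intro s hs; exact (key₂ _ s).mpr (Finset.mem_insert_of_mem hs)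
      · rw [key₃]
        intro y hy
        rcases Finset.mem_insert.mp hy with rfl | hyS
        · exact Or.inr hxG
        · exact Or.inl hyS
end

section
/- Let F be a standard Borel space. For every instance S ∈ Finset F, every m ∈ ℕ, and all measurable sets G₁, …, G_m ⊆ F, the set of parallel follow-up instances {S ∪ {x₁, …, x_m} : x₁ ∈ G₁, …, x_m ∈ G_m} is a measurable subset of the instance space 𝔻. -/
/-!
`T` is a parallel follow-up of `S` iff `S ⊆ T`, every `Gᵢ` meets `T`, and the new facts `T \ S`
can be sent injectively to indices `i` with `x ∈ Gᵢ` (the indices left over take any point of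
`T ∩ Gᵢ`). By Hall's theorem such an injection exists iff, for every set of indices `I`, at most
`#I` new facts avoid `⋃_{i ∉ I} Gᵢ`. All three conditions are statements about the counts
`#(T ∩ A) = ι(T)(A)` for measurable `A`, and these are measurable functions on the instance space.
-/

open MeasureTheory

open Finset Function

section Measurability

variable {F : Type*} [MeasurableSpace F]

theorem iota_apply_s8 (T : Finset F) {p : F → Prop} [DecidablePred p]
    (hp : MeasurableSet {x | p x}) : iota T {x | p x} = #{x ∈ T | p x} := by
  rw [iota, Measure.finsetSum_apply, card_filter, Nat.cast_sum]
  refine sum_congr rfl fun x _ => ?_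
  by_cases hx : p x <;> simp [Measure.dirac_apply' _ hp, hx]

theorem measurable_card_filter {p : F → Prop} [DecidablePred p] (hp : MeasurableSet {x | p x}) :
    Measurable fun T : Finset F => #{x ∈ T | p x} := by
  refine measurable_to_countable' fun n => ?_
  have hiota : Measurable fun T : Finset F => iota T {x | p x} :=
    (Measure.measurable_coe hp).comp (comap_measurable iota)
  convert hiota (measurableSet_singleton (n : ENNReal)) using 1
  ext T
  simp [iota_apply_s8 T hp]

theorem measurableSet_setOf_exists_mem {A : Set F} (hA : MeasurableSet A) :
    MeasurableSet {T : Finset F | ∃ x ∈ T, x ∈ A} := by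
  classical
  convert measurable_card_filter (p := (· ∈ A)) hA (measurableSet_Ioi (a := 0)) using 1
  ext T
  simp [card_pos, filter_nonempty_iff]

theorem measurableSet_setOf_superset [MeasurableSingletonClass F] (S : Finset F) :
    MeasurableSet {T : Finset F | S ⊆ T} := by
  convert MeasurableSet.biInter S.countable_toSet
    fun x _ => measurableSet_setOf_exists_mem (measurableSet_singleton x) using 1
  ext T
  simp [subset_iff]

end Measurability

section FollowUp

variable {F ι : Type*} [Fintype ι]

open Classical in
theorem exists_injective_mem_of_card_filter_le (W : Finset F) (G : ι → Set F)
    (hW : ∀ I : Finset ι, #{x ∈ W | x ∉ ⋃ i ∉ I, G i} ≤ #I) :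
    ∃ f : W → ι, Injective f ∧ ∀ w, (w : F) ∈ G (f w) := by
  classical
  have hall : ∀ s : Finset W, #s ≤ #(s.biUnion fun w => {i | (w : F) ∈ G i}) := by
    intro s
    calc #s = #(s.image Subtype.val) := (card_image_of_injective s Subtype.val_injective).symm
      _ ≤ #{x ∈ W | x ∉ ⋃ i ∉ s.biUnion fun w => {i | (w : F) ∈ G i}, G i} := by
          refine card_le_card fun x hx => ?_
          obtain ⟨w, hw, rfl⟩ := mem_image.mp hx
          refine mem_filter.mpr ⟨w.2, ?_⟩
          simp only [Set.mem_iUnion, mem_biUnion, mem_filter, mem_univ, true_and, not_exists]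
          exact fun i hi hwi => hi w ⟨hw, hwi⟩
      _ ≤ _ := hW _
  obtain ⟨f, hf, hfG⟩ := (all_card_le_biUnion_card_iff_exists_injective _).mp hall
  exact ⟨f, hf, fun w => by simpa using hfG w⟩

variable [DecidableEq F]

theorem mem_image_union_image_of_injective {S T : Finset F} {G : ι → Set F} (hST : S ⊆ T)
    (hTG : ∀ i, ∃ x ∈ T, x ∈ G i) {f : ↥(T \ S) → ι} (hf : Injective f)
    (hfG : ∀ w, (w : F) ∈ G (f w)) :
    T ∈ (fun v : ι → F => S ∪ Finset.image v Finset.univ) '' Set.univ.pi G := by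
  choose g hgT hgG using hTG
  set v := extend f Subtype.val g
  have hvf (w : ↥(T \ S)) : v (f w) = w := hf.extend_apply _ _ _
  have hv (i : ι) : v i ∈ T ∧ v i ∈ G i := by
    by_cases hi : ∃ w, f w = i
    · obtain ⟨w, rfl⟩ := hi
      rw [hvf]
      exact ⟨(mem_sdiff.mp w.2).1, hfG w⟩
    · rw [show v i = g i from extend_apply' _ _ _ hi]
      exact ⟨hgT i, hgG i⟩
  refine ⟨v, fun i _ => (hv i).2, subset_antisymm ?_ fun x hxT => ?_⟩
  · exact union_subset hST fun x hx => by
      obtain ⟨i, -, rfl⟩ := mem_image.mp hx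
      exact (hv i).1
  · by_cases hxS : x ∈ S
    · exact mem_union_left _ hxS
    · exact mem_union_right _
        (mem_image.mpr ⟨f ⟨x, mem_sdiff.mpr ⟨hxT, hxS⟩⟩, mem_univ _, hvf _⟩)

open Classical in
theorem mem_image_union_image_iff (S T : Finset F) (G : ι → Set F) :
    T ∈ (fun v : ι → F => S ∪ Finset.image v Finset.univ) '' Set.univ.pi G ↔
      S ⊆ T ∧ (∀ i, ∃ x ∈ T, x ∈ G i) ∧
        ∀ I : Finset ι, #{x ∈ T | x ∉ S ∧ x ∉ ⋃ i ∉ I, G i} ≤ #I := by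
  constructor
  · rintro ⟨v, hv, rfl⟩
    have hvG : ∀ i, v i ∈ G i := fun i => hv i (Set.mem_univ i)
    refine ⟨subset_union_left, fun i => ⟨v i, by simp, hvG i⟩, fun I => ?_⟩
    calc #{x ∈ S ∪ image v univ | x ∉ S ∧ x ∉ ⋃ i ∉ I, G i} ≤ #(I.image v) := by
          refine card_le_card fun x hx => ?_
          simp only [mem_filter, mem_union, mem_image, mem_univ, true_and, Set.mem_iUnion,
            not_exists] at hx
          obtain ⟨hxS | ⟨i, rfl⟩, hxS', hxG⟩ := hx
          · exact absurd hxS hxS'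
          · exact mem_image_of_mem v (by_contra fun hi => hxG i hi (hvG i))
      _ ≤ #I := card_image_le
  · rintro ⟨hST, hTG, hHall⟩
    obtain ⟨f, hf, hfG⟩ := exists_injective_mem_of_card_filter_le (T \ S) G fun I => by
      simpa only [sdiff_eq_filter, filter_filter] using hHall I
    exact mem_image_union_image_of_injective hST hTG hf hfG

end FollowUp

/-- For every instance `S`, every `m ∈ ℕ` and all measurable sets `G₁, …, G_m ⊆ F`,
the set of parallel follow-up instances `{S ∪ {x₁, …, x_m} : xᵢ ∈ Gᵢ}` is a measurable
subset of the instance space `𝔻`. -/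
theorem measurableSet_parallelFollowUp (F : Type*) [MeasurableSpace F]
    [StandardBorelSpace F] [DecidableEq F] (S : Finset F) (m : ℕ)
    (G : Fin m → Set F) (hG : ∀ i, MeasurableSet (G i)) :
    MeasurableSet
      ((fun v : Fin m → F => S ∪ Finset.image v Finset.univ) '' (Set.univ.pi G)) := by
  classical
  have hblocked (I : Finset (Fin m)) : MeasurableSet {x | x ∉ S ∧ x ∉ ⋃ i ∉ I, G i} :=
    S.finite_toSet.measurableSet.compl.inter (.compl (.iUnion fun i => .iUnion fun _ => hG i))
  have hchar : (fun v : Fin m → F => S ∪ Finset.image v Finset.univ) '' (Set.univ.pi G) =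
      {T | S ⊆ T} ∩ (⋂ i, {T | ∃ x ∈ T, x ∈ G i}) ∩
        ⋂ I : Finset (Fin m), {T | #{x ∈ T | x ∉ S ∧ x ∉ ⋃ i ∉ I, G i} ≤ #I} := by
    ext T
    simp only [mem_image_union_image_iff, Set.mem_inter_iff, Set.mem_iInter, Set.mem_ofPred_eq,
      and_assoc]
  rw [hchar]
  exact ((measurableSet_setOf_superset S).inter
    (.iInter fun i => measurableSet_setOf_exists_mem (hG i))).inter
    (.iInter fun I => measurable_card_filter (hblocked I) measurableSet_Iic)
end

section
/- Let X be a standard Borel space. For each i ∈ ℕ, the set Tᵢ := {d : ℕ → X : d(j) = d(i) for all j ≥ i} of sequences terminating after i steps is measurable in the product σ-algebra on X^ℕ; consequently, the set T := ⋃_{i∈ℕ} Tᵢ of eventually constant sequences is measurable, and for every measurable A ⊆ X the set of eventually constant sequences whose eventual value lies in A is measurable in the product σ-algebra on X^ℕ. In particular, the limit-instance map, sending an eventually constant sequence to its eventual value and all other sequences to a distinguished error point ⊥, is measurable. -/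
/-! A sequence terminates after `i` steps iff each pair `(d j, d i)`, `j ≥ i`, lies on the
diagonal of `X × X`, which is measurable in a standard Borel space. All sets in question, including
the preimages under `limitInst`, are then countable Boolean combinations of such sets and of
preimages of measurable sets under the coordinate maps. -/

open MeasureTheory

open Classical in
/-- The limit-instance map: an eventually constant sequence is sent to its eventual
value, and all other sequences are sent to the distinguished error point `⊥ = none`. -/
noncomputable def limitInst {X : Type*} (d : ℕ → X) : Option X :=
  if h : ∃ i : ℕ, ∀ j ≥ i, d j = d i then some (d h.choose) else none

section LimitInst

variable {X : Type*}

theorem limitInst_of_terminatingAfter {d : ℕ → X} {i : ℕ} (hi : ∀ j ≥ i, d j = d i) :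
    limitInst d = some (d i) := by
  have h : ∃ i : ℕ, ∀ j ≥ i, d j = d i := ⟨i, hi⟩
  rw [limitInst, dif_pos h, ← h.choose_spec (max i h.choose) (le_max_right _ _),
    hi _ (le_max_left _ _)]

theorem limitInst_of_not_eventuallyConst {d : ℕ → X} (h : ¬∃ i : ℕ, ∀ j ≥ i, d j = d i) :
    limitInst d = none :=
  dif_neg h

theorem preimage_limitInst (t : Set (Option X)) :
    limitInst ⁻¹' t = {d | ∃ i : ℕ, (∀ j ≥ i, d j = d i) ∧ d i ∈ some ⁻¹' t} ∪
      {d | none ∈ t ∧ ¬∃ i : ℕ, ∀ j ≥ i, d j = d i} := by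
  ext d
  by_cases h : ∃ i : ℕ, ∀ j ≥ i, d j = d i
  · obtain ⟨i, hi⟩ := h
    constructor
    · intro hd
      exact Or.inl ⟨i, hi, show some (d i) ∈ t by rwa [← limitInst_of_terminatingAfter hi]⟩
    · rintro (⟨k, hk, hkt⟩ | ⟨-, hne⟩)
      · rwa [Set.mem_preimage, limitInst_of_terminatingAfter hk]
      · exact absurd ⟨i, hi⟩ hne
  · change limitInst d ∈ t ↔ _
    rw [limitInst_of_not_eventuallyConst h]
    exact ⟨fun hn => Or.inr ⟨hn, h⟩,
      by rintro (⟨k, hk, -⟩ | ⟨hn, -⟩); exacts [absurd ⟨k, hk⟩ h, hn]⟩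

end LimitInst

section Measurability

variable {X : Type*} [MeasurableSpace X] [MeasurableEq X]

theorem measurableSet_terminatingAfter (i : ℕ) :
    MeasurableSet {d : ℕ → X | ∀ j ≥ i, d j = d i} := by
  measurability

theorem measurableSet_eventuallyConst :
    MeasurableSet {d : ℕ → X | ∃ i : ℕ, ∀ j ≥ i, d j = d i} := by
  measurability

theorem measurableSet_eventuallyConst_mem {A : Set X} (hA : MeasurableSet A) :
    MeasurableSet {d : ℕ → X | ∃ i : ℕ, (∀ j ≥ i, d j = d i) ∧ d i ∈ A} := by
  measurability

end Measurability

/-- On a standard Borel space `X`: for each `i`, the set of sequences terminating after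
`i` steps is measurable in the product σ-algebra on `X^ℕ`; consequently the set of
eventually constant sequences is measurable; for every measurable `A ⊆ X`, the set of
eventually constant sequences with eventual value in `A` is measurable; and the
limit-instance map into `X ∪ {⊥}` (carrying the σ-algebra of measurable subsets of `X`
and their unions with `{⊥}`, i.e. the σ-algebra mapped along `some`) is measurable. -/
theorem measurable_limitInst (X : Type*) [MeasurableSpace X] [StandardBorelSpace X] :
    (∀ i : ℕ, MeasurableSet {d : ℕ → X | ∀ j ≥ i, d j = d i}) ∧
    MeasurableSet {d : ℕ → X | ∃ i : ℕ, ∀ j ≥ i, d j = d i} ∧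
    (∀ A : Set X, MeasurableSet A →
      MeasurableSet {d : ℕ → X | ∃ i : ℕ, (∀ j ≥ i, d j = d i) ∧ d i ∈ A}) ∧
    @Measurable (ℕ → X) (Option X) inferInstance
      (MeasurableSpace.map some (inferInstance : MeasurableSpace X)) limitInst := by
  refine ⟨measurableSet_terminatingAfter, measurableSet_eventuallyConst,
    fun _ => measurableSet_eventuallyConst_mem, fun t ht => ?_⟩
  rw [preimage_limitInst]
  exact (measurableSet_eventuallyConst_mem (A := some ⁻¹' t) ht).union
    ((MeasurableSet.const _).inter measurableSet_eventuallyConst.compl)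
end

section
/- Let (X, 𝒳) be a measurable space, let Y be a Polish space equipped with its Borel σ-algebra, and let n ≥ 1. Let M : X → Set Y be such that M(x) is a finite set with exactly n elements for every x ∈ X, and such that {x ∈ X : M(x) ∩ U ≠ ∅} ∈ 𝒳 for every open set U ⊆ Y. Then there exist measurable functions s₁, …, sₙ : X → Y such that for every x ∈ X, the values s₁(x), …, sₙ(x) are pairwise distinct and M(x) = {s₁(x), …, sₙ(x)}. -/
/-!
Since `Y` is second countable, a measurable selection of a finite-valued measurable multifunction
is obtained greedily: run through a countable basis `b₀, b₁, …` and shrink `M x` to `M x ∩ bₖ`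
whenever this stays nonempty. The decreasing sets stabilise by finiteness, and the selected point
lies in `bₖ` exactly when the `k`-th refinement meets `bₖ`, which is a measurable condition.
Removing a measurable selection keeps the multifunction measurable (`Y` is T₁), so `n` successive
selections enumerate `M`.
-/

open MeasureTheory Set TopologicalSpace

def MeasurableMultifunction {X Y : Type*} [MeasurableSpace X] [TopologicalSpace Y]
    (M : X → Set Y) : Prop :=
  ∀ U : Set Y, IsOpen U → MeasurableSet {x | (M x ∩ U).Nonempty}

section GreedyRefinement

variable {X Y : Type*} (M : X → Set Y) (b : ℕ → Set Y)

open Classical in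
noncomputable def greedyRefinement : ℕ → X → Set Y
  | 0, x => M x
  | k + 1, x =>
      if (greedyRefinement k x ∩ b k).Nonempty then greedyRefinement k x ∩ b k
      else greedyRefinement k x

theorem greedyRefinement_succ_subset (k : ℕ) (x : X) :
    greedyRefinement M b (k + 1) x ⊆ greedyRefinement M b k x := by
  rw [greedyRefinement]
  split_ifs
  exacts [inter_subset_left, subset_rfl]

theorem greedyRefinement_antitone (x : X) : Antitone fun k => greedyRefinement M b k x :=
  antitone_nat_of_succ_le fun k => greedyRefinement_succ_subset M b k x

theorem greedyRefinement_nonempty {x : X} (hne : (M x).Nonempty) (k : ℕ) :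
    (greedyRefinement M b k x).Nonempty := by
  induction k with
  | zero => exact hne
  | succ k ih =>
    rw [greedyRefinement]
    split_ifs with h
    exacts [h, ih]

theorem nonempty_iInter_greedyRefinement {x : X} (hfin : (M x).Finite) (hne : (M x).Nonempty) :
    (⋂ k, greedyRefinement M b k x).Nonempty := by
  by_contra! hempty
  have hleave (y : Y) : ∃ k, y ∉ greedyRefinement M b k x := by
    simpa using (eq_empty_iff_forall_notMem.1 hempty y)
  choose leave hleave using hleave
  obtain ⟨K, hK⟩ := (hfin.image leave).bddAbove
  obtain ⟨y, hy⟩ := greedyRefinement_nonempty M b hne K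
  have hyM : y ∈ M x := greedyRefinement_antitone M b x K.zero_le hy
  exact hleave y (greedyRefinement_antitone M b x (hK (mem_image_of_mem leave hyM)) hy)

end GreedyRefinement

namespace MeasurableMultifunction

variable {X Y : Type*} [MeasurableSpace X] [TopologicalSpace Y] {M N : X → Set Y}

theorem inter_isOpen (hM : MeasurableMultifunction M) {V : Set Y} (hV : IsOpen V) :
    MeasurableMultifunction fun x => M x ∩ V := fun U hU => by
  simpa only [inter_assoc] using hM _ (hV.inter hU)

theorem ite {p : X → Prop} [DecidablePred p] (hp : MeasurableSet {x | p x})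
    (hM : MeasurableMultifunction M) (hN : MeasurableMultifunction N) :
    MeasurableMultifunction fun x => if p x then M x else N x := fun U hU => by
  have : {x | ((if p x then M x else N x) ∩ U).Nonempty} =
      {x | p x} ∩ {x | (M x ∩ U).Nonempty} ∪ {x | p x}ᶜ ∩ {x | (N x ∩ U).Nonempty} := by
    ext x
    by_cases h : p x <;> simp [h]
  rw [this]
  exact (hp.inter (hM U hU)).union (hp.compl.inter (hN U hU))

open Classical in
theorem greedyRefinement (hM : MeasurableMultifunction M) {b : ℕ → Set Y}
    (hb : ∀ k, IsOpen (b k)) (k : ℕ) : MeasurableMultifunction (greedyRefinement M b k) := by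
  induction k with
  | zero => exact hM
  | succ k ih => exact ite (ih _ (hb k)) (ih.inter_isOpen (hb k)) ih

theorem sdiff_singleton [T1Space Y] [SecondCountableTopology Y] [MeasurableSpace Y]
    [OpensMeasurableSpace Y] (hM : MeasurableMultifunction M) {s : X → Y} (hs : Measurable s) :
    MeasurableMultifunction fun x => M x \ {s x} := fun U hU => by
  have hB := isBasis_countableBasis Y
  have : {x | ((M x \ {s x}) ∩ U).Nonempty} =
      ⋃ V ∈ {V ∈ countableBasis Y | V ⊆ U}, {x | (M x ∩ V).Nonempty} \ s ⁻¹' V := by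
    ext x
    simp only [mem_ofPred_eq, mem_iUnion, mem_sdiff, mem_preimage, exists_prop]
    constructor
    · rintro ⟨y, ⟨hyM, hys⟩, hyU⟩
      obtain ⟨V, hV, hyV, hVU⟩ :=
        hB.exists_subset_of_mem_open (show y ∈ U \ {s x} from ⟨hyU, hys⟩)
          (hU.sdiff isClosed_singleton)
      exact ⟨V, ⟨hV, hVU.trans sdiff_subset⟩, ⟨y, hyM, hyV⟩, fun h => (hVU h).2 rfl⟩
    · rintro ⟨V, ⟨-, hVU⟩, ⟨y, hyM, hyV⟩, hsV⟩
      exact ⟨y, ⟨hyM, fun h : y = s x => hsV (h ▸ hyV)⟩, hVU hyV⟩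
  rw [this]
  exact .biUnion ((countable_countableBasis Y).mono (sep_subset _ _)) fun V hV =>
    (hM V (hB.isOpen hV.1)).diff (hs (hB.isOpen hV.1).measurableSet)

theorem exists_measurable_selection [SecondCountableTopology Y] [MeasurableSpace Y]
    [BorelSpace Y] (hM : MeasurableMultifunction M) (hfin : ∀ x, (M x).Finite)
    (hne : ∀ x, (M x).Nonempty) : ∃ s : X → Y, Measurable s ∧ ∀ x, s x ∈ M x := by
  obtain ⟨b, hb⟩ := exists_seq_basis Y
  have hb_open (k : ℕ) : IsOpen (b k) := hb.isOpen ⟨k, rfl⟩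
  choose s hs using fun x => nonempty_iInter_greedyRefinement M b (hfin x) (hne x)
  have hs_mem (k : ℕ) (x : X) : s x ∈ _root_.greedyRefinement M b k x := mem_iInter.1 (hs x) k
  have preimage_eq (k : ℕ) :
      s ⁻¹' b k = {x | (_root_.greedyRefinement M b k x ∩ b k).Nonempty} := by
    ext x
    refine ⟨fun h => ⟨s x, hs_mem k x, h⟩, fun (h : (_ ∩ b k).Nonempty) => ?_⟩
    have := hs_mem (k + 1) x
    rw [_root_.greedyRefinement, if_pos h] at this
    exact this.2
  refine ⟨s, ?_, hs_mem 0⟩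
  rw [BorelSpace.measurable_eq (α := Y), hb.borel_eq_generateFrom]
  refine measurable_generateFrom ?_
  rintro _ ⟨k, rfl⟩
  rw [preimage_eq]
  exact hM.greedyRefinement hb_open k _ (hb_open k)

end MeasurableMultifunction

theorem exists_measurable_enumeration_of_finite_multifunction_general {X Y : Type*}
    [MeasurableSpace X] [TopologicalSpace Y] [PolishSpace Y]
    [MeasurableSpace Y] [BorelSpace Y]
    (n : ℕ) (M : X → Set Y)
    (hfin : ∀ x, (M x).Finite) (hcard : ∀ x, (M x).ncard = n)
    (hmeas : ∀ U : Set Y, IsOpen U → MeasurableSet {x | (M x ∩ U).Nonempty}) :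
    ∃ s : Fin n → X → Y,
      (∀ i, Measurable (s i)) ∧
      ∀ x : X, (Function.Injective fun i => s i x) ∧
        M x = Set.range (fun i => s i x) := by
  induction n generalizing M with
  | zero =>
    refine ⟨fun i => i.elim0, fun i => i.elim0, fun x => ⟨fun i => i.elim0, ?_⟩⟩
    simpa using (ncard_eq_zero (hfin x)).1 (hcard x)
  | succ n ih =>
    obtain ⟨s₀, hs₀, hs₀M⟩ := MeasurableMultifunction.exists_measurable_selection hmeas hfin
      fun x => nonempty_of_ncard_ne_zero (by simp [hcard])
    obtain ⟨s, hs, hsM⟩ := ih (fun x => M x \ {s₀ x}) (fun x => (hfin x).sdiff)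
      (fun x => by simp [ncard_sdiff_singleton_of_mem (hs₀M x), hcard])
      (MeasurableMultifunction.sdiff_singleton hmeas hs₀)
    refine ⟨fun i x => (Fin.cons (s₀ x) (fun j => s j x) : Fin (n + 1) → Y) i,
      fun i => i.cases (by simpa using hs₀) (fun j => by simpa using hs j), fun x => ⟨?_, ?_⟩⟩
    · refine Fin.cons_injective_of_injective (fun hmem => ?_) (hsM x).1
      rw [← (hsM x).2] at hmem
      exact hmem.2 rfl
    · rw [Fin.range_cons, ← (hsM x).2, insert_sdiff_self_of_mem (hs₀M x)]

/-- A measurable multifunction `M : X ⇉ Y` into a Polish space (with its Borel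
σ-algebra) whose values all have exactly `n ≥ 1` elements can be decomposed into `n`
measurable selections that enumerate it without repetition. -/
theorem exists_measurable_enumeration_of_finite_multifunction {X Y : Type*}
    [MeasurableSpace X] [TopologicalSpace Y] [PolishSpace Y]
    [MeasurableSpace Y] [BorelSpace Y]
    (n : ℕ) (hn : 1 ≤ n) (M : X → Set Y)
    (hfin : ∀ x, (M x).Finite) (hcard : ∀ x, (M x).ncard = n)
    (hmeas : ∀ U : Set Y, IsOpen U → MeasurableSet {x | (M x ∩ U).Nonempty}) :
    ∃ s : Fin n → X → Y,
      (∀ i, Measurable (s i)) ∧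
      ∀ x : X, (Function.Injective fun i => s i x) ∧
        M x = Set.range (fun i => s i x) :=
  exists_measurable_enumeration_of_finite_multifunction_general n M hfin hcard hmeas
end
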